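/- For all a, b ∈ A and y ∈ C one has (a⊗by)·E = (aS_C(y)⊗b)·E in A⊗A, and for all a, b ∈ A the element (a⊗b)·E − a⊗b lies in the subspace J_r := span_ℂ{a'⊗b'y − a'S_C(y)⊗b' : y ∈ C, a', b' ∈ A}. (Hence the map θ_r(a⊗b) = (a⊗b)·E descends to a well-defined map on the balanced quotient A⊗_rA := (A⊗A)/J_r which is a section of the quotient map.) -/
import Mathlib


open scoped TensorProduct

set_option synthInstance.maxHeartbeats 1000000
set_option maxHeartbeats 1000000

/-- The canonical inclusion `B ⊗ C → A ⊗ A` for subalgebras `B, C ⊆ A`. -/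
noncomputable def incl {A : Type*} [Ring A] [Algebra ℂ A] (B C : Subalgebra ℂ A) :
    (↥B ⊗[ℂ] ↥C) →ₗ[ℂ] (A ⊗[ℂ] A) :=
  TensorProduct.map B.val.toLinearMap C.val.toLinearMap

/-- The linear map `μ_{S_B} : B ⊗ C → C`, `b ⊗ c ↦ S_B(b)·c`. -/
noncomputable def muSB {A : Type*} [Ring A] [Algebra ℂ A] {B C : Subalgebra ℂ A}
    (SB : ↥B ≃ₗ[ℂ] ↥C) : (↥B ⊗[ℂ] ↥C) →ₗ[ℂ] ↥C :=
  TensorProduct.lift (LinearMap.mul ℂ ↥C) ∘ₗ TensorProduct.map SB.toLinearMap LinearMap.id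

/-- The linear map `μ_{S_C} : B ⊗ C → B`, `b ⊗ c ↦ b·S_C(c)`. -/
noncomputable def muSC {A : Type*} [Ring A] [Algebra ℂ A] {B C : Subalgebra ℂ A}
    (SC : ↥C ≃ₗ[ℂ] ↥B) : (↥B ⊗[ℂ] ↥C) →ₗ[ℂ] ↥B :=
  TensorProduct.lift (LinearMap.mul ℂ ↥B) ∘ₗ TensorProduct.map LinearMap.id SC.toLinearMap

/-- For all `a, b ∈ A` and `y ∈ C` one has `(a⊗by)·E = (aS_C(y)⊗b)·E` in `A⊗A`, and
`(a⊗b)·E − a⊗b` lies in the balancing subspace `J_r`. -/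
theorem stmt11 {A : Type*} [Ring A] [Algebra ℂ A] (B C : Subalgebra ℂ A)
    (hcomm : ∀ (x : ↥B) (y : ↥C), (x : A) * (y : A) = (y : A) * (x : A))
    (SB : ↥B ≃ₗ[ℂ] ↥C) (hSBmul : ∀ x x' : ↥B, SB (x * x') = SB x' * SB x)
    (hSBone : SB 1 = 1)
    (SC : ↥C ≃ₗ[ℂ] ↥B) (hSCmul : ∀ y y' : ↥C, SC (y * y') = SC y' * SC y)
    (hSCone : SC 1 = 1)
    (E : ↥B ⊗[ℂ] ↥C) (hEidem : E * E = E)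
    (hE1 : ∀ x : ↥B, E * (x ⊗ₜ[ℂ] (1 : ↥C)) = E * ((1 : ↥B) ⊗ₜ[ℂ] SB x))
    (hE2 : ∀ y : ↥C, ((1 : ↥B) ⊗ₜ[ℂ] y) * E = (SC y ⊗ₜ[ℂ] (1 : ↥C)) * E)
    (hn1 : muSB SB E = 1) (hn2 : muSC SC E = 1) :
    (∀ (a b : A) (y : ↥C),
      (a ⊗ₜ[ℂ] (b * (y : A))) * incl B C E =
        ((a * ((SC y : ↥B) : A)) ⊗ₜ[ℂ] b) * incl B C E) ∧
    (∀ a b : A,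
      (a ⊗ₜ[ℂ] b) * incl B C E - a ⊗ₜ[ℂ] b ∈
        Submodule.span ℂ {z : A ⊗[ℂ] A |
          ∃ (y : ↥C) (a' b' : A),
            z = a' ⊗ₜ[ℂ] (b' * (y : A)) - (a' * ((SC y : ↥B) : A)) ⊗ₜ[ℂ] b'}) := by

  classical
  have hincl : ∀ t : ↥B ⊗[ℂ] ↥C,
      incl B C t = Algebra.TensorProduct.map B.val C.val t := fun t => rfl
  have key : ∀ (a b : A) (y : ↥C),
      (a ⊗ₜ[ℂ] (b * (y : A))) * incl B C E =
        ((a * ((SC y : ↥B) : A)) ⊗ₜ[ℂ] b) * incl B C E := by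
    intro a b y
    have h2 : ((1 : A) ⊗ₜ[ℂ] (y : A)) * incl B C E =
        (((SC y : ↥B) : A) ⊗ₜ[ℂ] (1 : A)) * incl B C E := by
      rw [hincl]
      have := congrArg (Algebra.TensorProduct.map B.val C.val) (hE2 y)
      simpa [map_mul] using this
    calc (a ⊗ₜ[ℂ] (b * (y : A))) * incl B C E
        = (a ⊗ₜ[ℂ] b) * (((1 : A) ⊗ₜ[ℂ] (y : A)) * incl B C E) := by
          rw [← mul_assoc, Algebra.TensorProduct.tmul_mul_tmul, mul_one]
      _ = (a ⊗ₜ[ℂ] b) * ((((SC y : ↥B) : A) ⊗ₜ[ℂ] (1 : A)) * incl B C E) := by rw [h2]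
      _ = ((a * ((SC y : ↥B) : A)) ⊗ₜ[ℂ] b) * incl B C E := by
          rw [← mul_assoc, Algebra.TensorProduct.tmul_mul_tmul, mul_one]
  refine ⟨key, ?_⟩
  intro a b
  set J := Submodule.span ℂ {z : A ⊗[ℂ] A |
      ∃ (y : ↥C) (a' b' : A),
        z = a' ⊗ₜ[ℂ] (b' * (y : A)) - (a' * ((SC y : ↥B) : A)) ⊗ₜ[ℂ] b'} with hJ
  have main : ∀ t : ↥B ⊗[ℂ] ↥C,
      (a ⊗ₜ[ℂ] b) * incl B C t - (a * ((muSC SC t : ↥B) : A)) ⊗ₜ[ℂ] b ∈ J := by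
    intro t
    induction t using TensorProduct.induction_on with
    | zero => simp
    | tmul x y =>
        have hmu : muSC SC (x ⊗ₜ[ℂ] y) = x * SC y := by
          simp [muSC]
        rw [hmu, hincl]
        have : (a ⊗ₜ[ℂ] b) * (Algebra.TensorProduct.map B.val C.val) (x ⊗ₜ[ℂ] y)
            = (a * (x : A)) ⊗ₜ[ℂ] (b * (y : A)) := by
          simp [Algebra.TensorProduct.tmul_mul_tmul]
        rw [this]
        apply Submodule.subset_span
        exact ⟨y, a * (x : A), b, by rw [mul_assoc]; rfl⟩
    | add t1 t2 h1 h2 =>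
        have : (a ⊗ₜ[ℂ] b) * incl B C (t1 + t2) -
            (a * ((muSC SC (t1 + t2) : ↥B) : A)) ⊗ₜ[ℂ] b =
            ((a ⊗ₜ[ℂ] b) * incl B C t1 - (a * ((muSC SC t1 : ↥B) : A)) ⊗ₜ[ℂ] b) +
            ((a ⊗ₜ[ℂ] b) * incl B C t2 - (a * ((muSC SC t2 : ↥B) : A)) ⊗ₜ[ℂ] b) := by
          rw [map_add, map_add, mul_add]
          push_cast [Subalgebra.coe_add, mul_add, TensorProduct.add_tmul]
          abel
        rw [this]
        exact J.add_mem h1 h2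
  have := main E
  rw [hn2] at this
  simpa using this
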